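/- arXiv:2507.18717 — 8 statements merged into one kernel-verified Lean document; each statement's English description precedes it below -/
import Mathlib

section
/- With the element-wise mass-projection setup, for every index i the identity U^H i − U^L i = (m i)⁻¹ • ∑_{j∈ι} (b i j • R j − b j i • R i) holds. (This is the decomposition identity (4.2) of the element-wise projection, expressing the difference of high- and low-order states as a sum of antisymmetric fluctuation terms.) -/
/-- Decomposition identity (4.2) of the element-wise mass projection: the difference of the
high-order state `U^H` and the low-order state `U^L` is a sum of antisymmetric
fluctuation terms. -/
theorem element_wise_decomposition_identity
    {ι : Type*} [Fintype ι] [DecidableEq ι]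
    {E : Type*} [AddCommGroup E] [Module ℝ E]
    (M : Matrix ι ι ℝ) (hM_symm : M.IsSymm) (hM_inv : IsUnit M.det)
    (m : ι → ℝ) (hm : ∀ i, m i = ∑ j, M i j) (hm_ne : ∀ i, m i ≠ 0)
    (R : ι → E)
    (UH : ι → E) (hUH : ∀ i, UH i = ∑ j, (M⁻¹ i j) • R j)
    (UL : ι → E) (hUL : ∀ i, UL i = (m i)⁻¹ • R i)
    (b : ι → ι → ℝ)
    (hb : ∀ i j, b i j = m i * (M⁻¹ i j) - (if i = j then (1 : ℝ) else 0)) :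
    ∀ i, UH i - UL i = (m i)⁻¹ • ∑ j, ((b i j) • R j - (b j i) • R i) := by
  intro i
  have hsymInv : M⁻¹.IsSymm := by
    unfold Matrix.IsSymm
    rw [Matrix.transpose_nonsing_inv, hM_symm]
  have hsym : ∀ j, M⁻¹ j i = M⁻¹ i j := fun j => by
    conv_lhs => rw [← hsymInv]
    rfl
  have hinv : ∀ k, (∑ j, M⁻¹ i j * M j k) = if i = k then (1:ℝ) else 0 := by
    intro k
    have := Matrix.nonsing_inv_mul M hM_inv
    have h := congrFun (congrFun this i) k
    simpa [Matrix.mul_apply, Matrix.one_apply] using h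
  have hcol : (∑ j, b j i) = 0 := by
    have h1 : (∑ j, m j * M⁻¹ j i) = 1 := by
      calc (∑ j, m j * M⁻¹ j i) = ∑ j, ∑ k, M⁻¹ i j * M j k := by
            apply Finset.sum_congr rfl
            intro j _
            rw [hm j, hsym j, Finset.sum_mul]
            exact Finset.sum_congr rfl fun k _ => mul_comm _ _
        _ = ∑ k, ∑ j, M⁻¹ i j * M j k := Finset.sum_comm
        _ = ∑ k, if i = k then (1:ℝ) else 0 := by
            exact Finset.sum_congr rfl fun k _ => hinv k
        _ = 1 := by simp
    calc (∑ j, b j i) = (∑ j, m j * M⁻¹ j i) - ∑ j, (if j = i then (1:ℝ) else 0) := by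
          simp [hb, Finset.sum_sub_distrib]
      _ = 0 := by rw [h1]; simp
  have hrow : (∑ j, b i j • R j) = m i • UH i - R i := by
    calc (∑ j, b i j • R j)
        = ∑ j, ((m i * M⁻¹ i j) • R j - (if i = j then (1:ℝ) else 0) • R j) := by
          apply Finset.sum_congr rfl
          intro j _
          rw [hb, sub_smul]
      _ = (∑ j, (m i * M⁻¹ i j) • R j) - ∑ j, (if i = j then (1:ℝ) else 0) • R j := by
          rw [Finset.sum_sub_distrib]
      _ = m i • UH i - R i := by
          rw [hUH, Finset.smul_sum]
          congr 1
          · exact Finset.sum_congr rfl fun j _ => (smul_smul _ _ _).symm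
          · simp
  rw [Finset.sum_sub_distrib, hrow, ← Finset.sum_smul, hcol]
  simp [smul_sub, smul_smul, inv_mul_cancel₀ (hm_ne i), hUL]
end

section
/- With the element-wise mass-projection setup, let l : ι → ι → ℝ be any symmetric family of limiter coefficients (l i j = l j i), and define the limited state U i := U^L i + (m i)⁻¹ • ∑_{j∈ι} (l i j) • (b i j • R j − b j i • R i). Then ∑_{i∈ι} (m i) • U i = ∑_{i∈ι} R i; that is, the limited element-wise mass projection is conservative (conservation part of Lemma 4.1). -/
/-- Conservation of the limited element-wise mass projection (conservation part of
Lemma 4.1): for any symmetric limiter coefficients `l`, the limited states `U` satisfy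
`∑ i, m i • U i = ∑ i, R i`. -/
theorem limited_element_wise_projection_conservative
    {ι : Type*} [Fintype ι] [DecidableEq ι]
    {E : Type*} [AddCommGroup E] [Module ℝ E]
    (M : Matrix ι ι ℝ) (hM_symm : M.IsSymm) (hM_inv : IsUnit M.det)
    (m : ι → ℝ) (hm : ∀ i, m i = ∑ j, M i j) (hm_ne : ∀ i, m i ≠ 0)
    (R : ι → E)
    (UL : ι → E) (hUL : ∀ i, UL i = (m i)⁻¹ • R i)
    (b : ι → ι → ℝ)
    (hb : ∀ i j, b i j = m i * (M⁻¹ i j) - (if i = j then (1 : ℝ) else 0))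
    (l : ι → ι → ℝ) (hl_symm : ∀ i j, l i j = l j i)
    (U : ι → E)
    (hU : ∀ i, U i = UL i + (m i)⁻¹ • ∑ j, (l i j) • ((b i j) • R j - (b j i) • R i)) :
    ∑ i, (m i) • U i = ∑ i, R i := by
  have key : ∀ i, m i • U i = R i + ∑ j, (l i j) • ((b i j) • R j - (b j i) • R i) := by
    intro i
    rw [hU, hUL, smul_add, smul_smul, mul_inv_cancel₀ (hm_ne i), one_smul, smul_smul,
      mul_inv_cancel₀ (hm_ne i), one_smul]
  simp_rw [key]
  rw [Finset.sum_add_distrib]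
  have hzero : ∑ i, ∑ j, (l i j) • ((b i j) • R j - (b j i) • R i) = 0 := by
    have h := Finset.sum_comm (s := (Finset.univ : Finset ι)) (t := Finset.univ)
      (f := fun i j => (l i j) • ((b i j) • R j - (b j i) • R i))
    have h2 : (2:ℝ) • ∑ i, ∑ j, (l i j) • ((b i j) • R j - (b j i) • R i) = 0 := by
      rw [two_smul]
      nth_rewrite 2 [h]
      rw [← Finset.sum_add_distrib]
      apply Finset.sum_eq_zero; intro i _
      rw [← Finset.sum_add_distrib]
      apply Finset.sum_eq_zero; intro j _
      rw [hl_symm j i, smul_sub, smul_sub]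
      abel
    simpa using smul_eq_zero.mp h2
  rw [hzero, add_zero]
end

section
/- With the mass-redistribution setup, assume in addition that all masses are positive (m̃ i > 0 for all i, hence m i > 0) and all constraint coefficients are nonnegative (c j i ≥ 0 for all j ∈ C, i ∈ ι). Then for every unconstrained index i ∉ C the low-order redistribution state satisfies U^L i ∈ convexHull ℝ ({Ũ i} ∪ {Ũ j : j ∈ C}); in particular U^L i lies in every convex set containing Ũ i and the constrained states Ũ j, j ∈ C (invariant-domain part of Lemma 4.2 for the low-order update). -/
/-- Invariant-domain part of Lemma 4.2 for the low-order mass-redistribution update: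
with positive masses and nonnegative constraint coefficients, the low-order state `U^L i`
of an unconstrained degree of freedom lies in the convex hull of the preliminary state
`Ũ i` and the constrained preliminary states `Ũ j`, `j ∈ C`. -/
theorem low_order_redistribution_mem_convexHull
    {ι : Type*} [Fintype ι] [DecidableEq ι]
    {E : Type*} [AddCommGroup E] [Module ℝ E]
    (C : Finset ι) (c : ι → ι → ℝ)
    (hc_closed : ∀ j ∈ C, ∀ i ∈ C, c j i = 0)
    (hc_sum : ∀ j ∈ C, ∑ i, c j i = 1)
    (mt : ι → ℝ) (hmt_pos : ∀ i, 0 < mt i)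
    (hc_nonneg : ∀ j ∈ C, ∀ i, 0 ≤ c j i)
    (Ut : ι → E)
    (m : ι → ℝ) (hm : ∀ i ∉ C, m i = mt i + ∑ j ∈ C, (c j i) * mt j)
    (hm_ne : ∀ i ∉ C, m i ≠ 0)
    (UL : ι → E)
    (hUL : ∀ i ∉ C, UL i = (m i)⁻¹ • ((mt i) • Ut i + ∑ j ∈ C, ((c j i) * mt j) • Ut j)) :
    ∀ i ∉ C, UL i ∈ convexHull ℝ (insert (Ut i) (Ut '' (C : Set ι))) := by
  intro i hi
  set t : Finset ι := insert i C with ht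
  set w : ι → ℝ := fun k => if k = i then mt i else c k i * mt k with hw
  have hwnn : ∀ k ∈ t, 0 ≤ w k := by
    intro k hk
    by_cases h : k = i
    · simp [hw, h, (hmt_pos i).le]
    · simp only [ht, Finset.mem_insert] at hk
      rcases hk with h' | hk
      · exact absurd h' h
      · simp [hw, h]
        exact mul_nonneg (hc_nonneg k hk i) (hmt_pos k).le
  have hsum : ∑ k ∈ t, w k = m i := by
    rw [ht, Finset.sum_insert hi, hm i hi]
    congr 1
    · simp [hw]
    · apply Finset.sum_congr rfl
      intro j hj
      have : j ≠ i := fun h => hi (h ▸ hj)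
      simp [hw, this]
  have hmpos : 0 < m i := by
    rw [hm i hi]
    have : 0 ≤ ∑ j ∈ C, c j i * mt j :=
      Finset.sum_nonneg fun j hj => mul_nonneg (hc_nonneg j hj i) (hmt_pos j).le
    linarith [hmt_pos i]
  have hcm : UL i = t.centerMass w Ut := by
    rw [Finset.centerMass, hsum, hUL i hi, ht, Finset.sum_insert hi]
    congr 1
    congr 1
    · simp [hw]
    · apply Finset.sum_congr rfl
      intro j hj
      have : j ≠ i := fun h => hi (h ▸ hj)
      simp [hw, this]
  rw [hcm]
  apply Finset.centerMass_mem_convexHull t hwnn (by rw [hsum]; exact hmpos)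
  intro k hk
  simp only [ht, Finset.mem_insert] at hk
  rcases hk with h | hk
  · exact h ▸ Set.mem_insert _ _
  · exact Set.mem_insert_iff.2 (Or.inr ⟨k, hk, rfl⟩)
end

section
/- With the mass-redistribution setup, the low-order redistribution update is conservative: ∑_{i∉C} (m i) • U^L i = ∑_{i∈ι} (m̃ i) • Ũ i (conservation part of Lemma 4.2 for the low-order update). -/
/-- Conservation part of Lemma 4.2 for the low-order mass-redistribution update:
`∑_{i ∉ C} m i • U^L i = ∑_i m̃ i • Ũ i`. -/
theorem low_order_redistribution_conservative
    {ι : Type*} [Fintype ι] [DecidableEq ι]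
    {E : Type*} [AddCommGroup E] [Module ℝ E]
    (C : Finset ι) (c : ι → ι → ℝ)
    (hc_closed : ∀ j ∈ C, ∀ i ∈ C, c j i = 0)
    (hc_sum : ∀ j ∈ C, ∑ i, c j i = 1)
    (mt : ι → ℝ) (hmt_ne : ∀ i, mt i ≠ 0)
    (Ut : ι → E)
    (m : ι → ℝ) (hm : ∀ i ∉ C, m i = mt i + ∑ j ∈ C, (c j i) * mt j)
    (hm_ne : ∀ i ∉ C, m i ≠ 0)
    (UL : ι → E)
    (hUL : ∀ i ∉ C, UL i = (m i)⁻¹ • ((mt i) • Ut i + ∑ j ∈ C, ((c j i) * mt j) • Ut j)) :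
    ∑ i ∈ Cᶜ, (m i) • UL i = ∑ i, (mt i) • Ut i := by
  have h1 : ∑ i ∈ Cᶜ, (m i) • UL i
      = ∑ i ∈ Cᶜ, ((mt i) • Ut i + ∑ j ∈ C, ((c j i) * mt j) • Ut j) := by
    refine Finset.sum_congr rfl fun i hi => ?_
    have hi' : i ∉ C := Finset.mem_compl.mp hi
    rw [hUL i hi', smul_smul, mul_inv_cancel₀ (hm_ne i hi'), one_smul]
  rw [h1, Finset.sum_add_distrib, Finset.sum_comm]
  have h2 : ∀ j ∈ C, ∑ i ∈ Cᶜ, ((c j i) * mt j) • Ut j = mt j • Ut j := by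
    intro j hj
    rw [← Finset.sum_smul]
    have : ∑ i ∈ Cᶜ, c j i * mt j = mt j := by
      rw [← Finset.sum_mul]
      have : ∑ i ∈ Cᶜ, c j i = ∑ i, c j i := by
        rw [← Finset.sum_compl_add_sum C (c j),
          Finset.sum_eq_zero (fun i hi => hc_closed j hj i hi), add_zero]
      rw [this, hc_sum j hj, one_mul]
    rw [this]
  rw [Finset.sum_congr rfl h2, add_comm, ← Finset.sum_compl_add_sum C (fun i => mt i • Ut i),
    add_comm]
end

section
/- With the mass-redistribution setup, the high-order redistribution update is conservative: ∑_{i∉C} (m i) • U^H i = ∑_{i∈ι} (m̃ i) • Ũ i (conservation part of Lemma 4.2 for the high-order update). -/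
/-- Conservation part of Lemma 4.2 for the high-order mass-redistribution update:
`∑_{i ∉ C} m i • U^H i = ∑_i m̃ i • Ũ i`. -/
theorem high_order_redistribution_conservative
    {ι : Type*} [Fintype ι] [DecidableEq ι]
    {E : Type*} [AddCommGroup E] [Module ℝ E]
    (C : Finset ι) (c : ι → ι → ℝ)
    (hc_closed : ∀ j ∈ C, ∀ i ∈ C, c j i = 0)
    (hc_sum : ∀ j ∈ C, ∑ i, c j i = 1)
    (mt : ι → ℝ) (hmt_ne : ∀ i, mt i ≠ 0)
    (Ut : ι → E)
    (m : ι → ℝ) (hm : ∀ i ∉ C, m i = mt i + ∑ j ∈ C, (c j i) * mt j)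
    (hm_ne : ∀ i ∉ C, m i ≠ 0)
    (D : ι → E) (hD : ∀ j ∈ C, D j = Ut j - ∑ k, (c j k) • Ut k)
    (UH : ι → E)
    (hUH : ∀ i ∉ C, UH i =
      (m i)⁻¹ • ((mt i) • Ut i + ∑ j ∈ C, ((c j i) * mt j) • (Ut i + D j))) :
    ∑ i ∈ Cᶜ, (m i) • UH i = ∑ i, (mt i) • Ut i := by
  have h1 : ∀ i ∈ Cᶜ, m i • UH i =
      mt i • Ut i + ∑ j ∈ C, ((c j i) * mt j) • (Ut i + D j) := by
    intro i hi
    have hi' : i ∉ C := Finset.mem_compl.mp hi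
    rw [hUH i hi', smul_inv_smul₀ (hm_ne i hi')]
  rw [Finset.sum_congr rfl h1, Finset.sum_add_distrib]
  have h2 : ∑ i ∈ Cᶜ, ∑ j ∈ C, ((c j i) * mt j) • (Ut i + D j)
      = ∑ j ∈ C, mt j • Ut j := by
    rw [Finset.sum_comm]
    refine Finset.sum_congr rfl fun j hj => ?_
    have hS : ∑ i ∈ Cᶜ, (c j i) • Ut i = ∑ i, (c j i) • Ut i := by
      rw [← Finset.sum_add_sum_compl C fun i => (c j i) • Ut i]
      have : ∑ i ∈ C, (c j i) • Ut i = 0 :=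
        Finset.sum_eq_zero fun i hi => by rw [hc_closed j hj i hi, zero_smul]
      rw [this, zero_add]
    have hT : ∑ i ∈ Cᶜ, c j i = 1 := by
      rw [← hc_sum j hj, ← Finset.sum_add_sum_compl C fun i => c j i]
      have : ∑ i ∈ C, c j i = 0 :=
        Finset.sum_eq_zero fun i hi => hc_closed j hj i hi
      rw [this, zero_add]
    calc ∑ i ∈ Cᶜ, ((c j i) * mt j) • (Ut i + D j)
        = mt j • (∑ i ∈ Cᶜ, (c j i) • Ut i + (∑ i ∈ Cᶜ, c j i) • D j) := by
          rw [smul_add, Finset.sum_smul, Finset.smul_sum, Finset.smul_sum,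
            ← Finset.sum_add_distrib]
          refine Finset.sum_congr rfl fun i _ => ?_
          rw [smul_add, mul_comm, mul_smul, mul_smul]
      _ = mt j • Ut j := by
          rw [hS, hT, one_smul, hD j hj]
          congr 1
          abel
  rw [h2, Finset.sum_compl_add_sum]
end

section
/- With the mass-redistribution setup, for every unconstrained index i ∉ C the decomposition identity U^H i − U^L i = (m i)⁻¹ • ∑_{j∈C} (c j i * m̃ j) • (Ũ i − ∑_{k∈ι} (c j k) • Ũ k) holds; that is, the difference of the high- and low-order redistribution states equals the sum over constrained degrees of freedom of the fluctuation terms P_i^j := (c_i^j m̃_j / m_i) (Ũ_i − ∑_k c_k^j Ũ_k). -/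
/-- Decomposition identity of the mass redistribution: the difference of the high- and
low-order redistribution states equals the sum over constrained degrees of freedom of the
fluctuation terms `P_i^j = (c_i^j m̃_j / m_i) (Ũ_i − ∑_k c_k^j Ũ_k)`. -/
theorem redistribution_decomposition_identity
    {ι : Type*} [Fintype ι] [DecidableEq ι]
    {E : Type*} [AddCommGroup E] [Module ℝ E]
    (C : Finset ι) (c : ι → ι → ℝ)
    (hc_closed : ∀ j ∈ C, ∀ i ∈ C, c j i = 0)
    (hc_sum : ∀ j ∈ C, ∑ i, c j i = 1)
    (mt : ι → ℝ) (hmt_ne : ∀ i, mt i ≠ 0)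
    (Ut : ι → E)
    (m : ι → ℝ) (hm : ∀ i ∉ C, m i = mt i + ∑ j ∈ C, (c j i) * mt j)
    (hm_ne : ∀ i ∉ C, m i ≠ 0)
    (D : ι → E) (hD : ∀ j ∈ C, D j = Ut j - ∑ k, (c j k) • Ut k)
    (UL : ι → E)
    (hUL : ∀ i ∉ C, UL i = (m i)⁻¹ • ((mt i) • Ut i + ∑ j ∈ C, ((c j i) * mt j) • Ut j))
    (UH : ι → E)
    (hUH : ∀ i ∉ C, UH i =
      (m i)⁻¹ • ((mt i) • Ut i + ∑ j ∈ C, ((c j i) * mt j) • (Ut i + D j))) :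
    ∀ i ∉ C, UH i - UL i =
      (m i)⁻¹ • ∑ j ∈ C, ((c j i) * mt j) • (Ut i - ∑ k, (c j k) • Ut k) := by
  intro i hi
  rw [hUH i hi, hUL i hi, ← smul_sub]
  congr 1
  rw [add_sub_add_left_eq_sub, ← Finset.sum_sub_distrib]
  refine Finset.sum_congr rfl fun j hj => ?_
  rw [← smul_sub, hD j hj]
  congr 1
  abel
end

section
/- With the mass-redistribution setup, for any limiter coefficients l : C → ℝ the limiting correction has zero total mass: ∑_{i∉C} ∑_{j∈C} (l j) * (c j i * m̃ j) • (Ũ i − ∑_{k∈ι} (c j k) • Ũ k) = 0. Equivalently, ∑_{i∉C} (m i) • (∑_{j∈C} (l j) • P_i^j) = 0 where P_i^j := (c_i^j m̃_j / m_i) • (Ũ_i − ∑_k c_k^j Ũ_k). (This is Lemma 4.3: the convex limiting procedure of the mass redistribution is conservative.) -/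
/-- Lemma 4.3: the convex limiting procedure of the mass redistribution is conservative;
for any limiter coefficients `l`, the limiting correction has zero total mass. -/
theorem redistribution_limiting_correction_conservative
    {ι : Type*} [Fintype ι] [DecidableEq ι]
    {E : Type*} [AddCommGroup E] [Module ℝ E]
    (C : Finset ι) (c : ι → ι → ℝ)
    (hc_closed : ∀ j ∈ C, ∀ i ∈ C, c j i = 0)
    (hc_sum : ∀ j ∈ C, ∑ i, c j i = 1)
    (mt : ι → ℝ) (hmt_ne : ∀ i, mt i ≠ 0)
    (Ut : ι → E)
    (m : ι → ℝ) (hm : ∀ i ∉ C, m i = mt i + ∑ j ∈ C, (c j i) * mt j)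
    (hm_ne : ∀ i ∉ C, m i ≠ 0)
    (l : ι → ℝ) :
    ∑ i ∈ Cᶜ, ∑ j ∈ C,
      (l j * ((c j i) * mt j)) • (Ut i - ∑ k, (c j k) • Ut k) = 0 := by
  rw [Finset.sum_comm]
  apply Finset.sum_eq_zero
  intro j hj
  set S : E := ∑ k, (c j k) • Ut k with hS
  have hfull : ∀ f : ι → E, ∑ i ∈ Cᶜ, (c j i) • f i = ∑ i, (c j i) • f i := by
    intro f
    rw [← Finset.sum_compl_add_sum C fun i => (c j i) • f i]
    have : ∑ i ∈ C, (c j i) • f i = 0 :=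
      Finset.sum_eq_zero fun i hi => by rw [hc_closed j hj i hi, zero_smul]
    rw [this, add_zero]
  have hsum : ∑ i ∈ Cᶜ, c j i = 1 := by
    rw [← hc_sum j hj, ← Finset.sum_compl_add_sum C (c j)]
    have : ∑ i ∈ C, c j i = 0 := Finset.sum_eq_zero fun i hi => hc_closed j hj i hi
    rw [this, add_zero]
  calc ∑ i ∈ Cᶜ, (l j * ((c j i) * mt j)) • (Ut i - S)
      = ∑ i ∈ Cᶜ, (l j * mt j) • ((c j i) • (Ut i - S)) := by
        apply Finset.sum_congr rfl; intro i _
        rw [smul_smul]; ring_nf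
    _ = (l j * mt j) • (∑ i ∈ Cᶜ, (c j i) • (Ut i - S)) := by rw [Finset.smul_sum]
    _ = 0 := by
        have : ∑ i ∈ Cᶜ, (c j i) • (Ut i - S)
            = (∑ i ∈ Cᶜ, (c j i) • Ut i) - (∑ i ∈ Cᶜ, c j i) • S := by
          rw [Finset.sum_smul, ← Finset.sum_sub_distrib]
          exact Finset.sum_congr rfl fun i _ => smul_sub _ _ _
        rw [this, hfull, hsum, one_smul, ← hS, sub_self, smul_zero]
end

section
/- With the mass-redistribution setup, for any limiter coefficients l : C → ℝ define the limited redistribution update for i ∉ C by U i := U^L i + (m i)⁻¹ • ∑_{j∈C} (l j) * (c j i * m̃ j) • (Ũ i − ∑_{k∈ι} (c j k) • Ũ k). Then the limited update is conservative: ∑_{i∉C} (m i) • U i = ∑_{i∈ι} (m̃ i) • Ũ i. -/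
/-- Conservation of the limited mass-redistribution update: for any limiter coefficients `l`,
the limited states `U` satisfy `∑_{i ∉ C} m i • U i = ∑_i m̃ i • Ũ i`. -/
theorem limited_redistribution_conservative
    {ι : Type*} [Fintype ι] [DecidableEq ι]
    {E : Type*} [AddCommGroup E] [Module ℝ E]
    (C : Finset ι) (c : ι → ι → ℝ)
    (hc_closed : ∀ j ∈ C, ∀ i ∈ C, c j i = 0)
    (hc_sum : ∀ j ∈ C, ∑ i, c j i = 1)
    (mt : ι → ℝ) (hmt_ne : ∀ i, mt i ≠ 0)
    (Ut : ι → E)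
    (m : ι → ℝ) (hm : ∀ i ∉ C, m i = mt i + ∑ j ∈ C, (c j i) * mt j)
    (hm_ne : ∀ i ∉ C, m i ≠ 0)
    (UL : ι → E)
    (hUL : ∀ i ∉ C, UL i = (m i)⁻¹ • ((mt i) • Ut i + ∑ j ∈ C, ((c j i) * mt j) • Ut j))
    (l : ι → ℝ)
    (U : ι → E)
    (hU : ∀ i ∉ C, U i = UL i + (m i)⁻¹ •
      ∑ j ∈ C, (l j * ((c j i) * mt j)) • (Ut i - ∑ k, (c j k) • Ut k)) :
    ∑ i ∈ Cᶜ, (m i) • U i = ∑ i, (mt i) • Ut i := by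
  have hsum_compl : ∀ j ∈ C, ∑ i ∈ Cᶜ, c j i = 1 := by
    intro j hj
    rw [← hc_sum j hj]
    refine Finset.sum_subset (Finset.subset_univ _) ?_
    intro i _ hi
    exact hc_closed j hj i (by simpa using hi)
  have key : ∀ i ∈ Cᶜ, m i • U i =
      (mt i • Ut i + ∑ j ∈ C, (c j i * mt j) • Ut j)
      + ∑ j ∈ C, (l j * (c j i * mt j)) • (Ut i - ∑ k, c j k • Ut k) := by
    intro i hi
    have hiC : i ∉ C := Finset.mem_compl.mp hi
    rw [hU i hiC, hUL i hiC, smul_add, smul_inv_smul₀ (hm_ne i hiC),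
      smul_inv_smul₀ (hm_ne i hiC)]
  rw [Finset.sum_congr rfl key, Finset.sum_add_distrib, Finset.sum_add_distrib]
  have hzero : ∑ i ∈ Cᶜ, ∑ j ∈ C, (l j * (c j i * mt j)) • (Ut i - ∑ k, c j k • Ut k) = 0 := by
    rw [Finset.sum_comm]
    refine Finset.sum_eq_zero fun j hj => ?_
    have : ∑ i ∈ Cᶜ, (l j * (c j i * mt j)) • (Ut i - ∑ k, c j k • Ut k)
        = (l j * mt j) • ∑ i ∈ Cᶜ, c j i • (Ut i - ∑ k, c j k • Ut k) := by
      rw [Finset.smul_sum]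
      refine Finset.sum_congr rfl fun i _ => ?_
      rw [smul_smul]; ring_nf
    rw [this]
    have h2 : ∑ i ∈ Cᶜ, c j i • (Ut i - ∑ k, c j k • Ut k)
        = ∑ i, c j i • (Ut i - ∑ k, c j k • Ut k) := by
      refine Finset.sum_subset (Finset.subset_univ _) ?_
      intro i _ hi
      rw [hc_closed j hj i (by simpa using hi), zero_smul]
    rw [h2]
    have h3 : ∑ i, c j i • (Ut i - ∑ k, c j k • Ut k)
        = (∑ i, c j i • Ut i) - (∑ i, c j i) • (∑ k, c j k • Ut k) := by
      rw [Finset.sum_smul]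
      rw [← Finset.sum_sub_distrib]
      refine Finset.sum_congr rfl fun i _ => ?_
      rw [smul_sub]
    rw [h3, hc_sum j hj, one_smul, sub_self, smul_zero]
  rw [hzero, add_zero]
  have hswap : ∑ i ∈ Cᶜ, ∑ j ∈ C, (c j i * mt j) • Ut j = ∑ j ∈ C, mt j • Ut j := by
    rw [Finset.sum_comm]
    refine Finset.sum_congr rfl fun j hj => ?_
    rw [← Finset.sum_smul]
    have : ∑ i ∈ Cᶜ, c j i * mt j = mt j := by
      rw [← Finset.sum_mul, hsum_compl j hj, one_mul]
    rw [this]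
  rw [hswap, Finset.sum_compl_add_sum]
end
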